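/- (Converse to the Roberts decomposition, power gauge.) Fix 0 < α < 1. Let μ be a finite positive Borel measure on ∂𝔻 and suppose there exists a constant C > 0 such that for every integer j₀ ≥ 0 one can write μ = Σ_{j=1}^∞ μ_j as a countable sum of positive measures with μ_j(I) ≤ C·|I|^α for every dyadic arc I of generation j + j₀. Then μ does not charge α-Beurling–Carleson sets: μ(E) = 0 for every α-Beurling–Carleson set E. -/

import Mathlib

open MeasureTheory Set Complex Filter
open scoped ENNReal NNReal Topology

noncomputable section

/-- The unit circle `∂𝔻 = {z : |z| = 1}` in the complex plane. -/
def unitCircle : Set ℂ := Metric.sphere 0 1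

/-- Arclength measure on the unit circle, the pushforward of Lebesgue measure on
`[0, 2π)` under `θ ↦ e^{iθ}`. -/
def arcMeasure : Measure ℂ :=
  Measure.map (circleMap 0 1) (volume.restrict (Set.Ico (0:ℝ) (2*Real.pi)))

/-- Arclength of a subset of the unit circle. -/
def arcLen (A : Set ℂ) : ℝ := (arcMeasure A).toReal

/-- The complementary arcs of a set `E ⊆ ∂𝔻`: the connected components of `∂𝔻 \ E`. -/
def complArcs (E : Set ℂ) : Set (Set ℂ) :=
  {J | ∃ x ∈ unitCircle \ E, J = connectedComponentIn (unitCircle \ E) x}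

/-- A Beurling–Carleson set: a closed subset of the unit circle of zero arclength whose
complementary arcs `J` satisfy `Σ |J| log(1/|J|) < ∞`. -/
def IsBeurlingCarleson (E : Set ℂ) : Prop :=
  IsClosed E ∧ E ⊆ unitCircle ∧ arcMeasure E = 0 ∧
    Summable (fun J : complArcs E => arcLen (J : Set ℂ) * Real.log (1 / arcLen (J : Set ℂ)))

/-- An `α`-Beurling–Carleson set: a closed subset of the unit circle of zero arclength whose
complementary arcs `J` satisfy `Σ |J|^α < ∞`. -/
def IsAlphaBeurlingCarleson (α : ℝ) (E : Set ℂ) : Prop :=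
  IsClosed E ∧ E ⊆ unitCircle ∧ arcMeasure E = 0 ∧
    Summable (fun J : complArcs E => arcLen (J : Set ℂ) ^ α)

/-- The Poisson integral of a measure `μ` on the unit circle. -/
def poisson (μ : Measure ℂ) (z : ℂ) : ℝ :=
  ∫ ζ, (1 - ‖z‖ ^ 2) / ‖ζ - z‖ ^ 2 ∂μ

/-- The singular inner function `S_μ(z) = exp(−∫ (ζ+z)/(ζ−z) dμ(ζ))`. -/
def singularInner (μ : Measure ℂ) (z : ℂ) : ℂ :=
  Complex.exp (-∫ ζ, (ζ + z) / (ζ - z) ∂μ)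

/-- Membership in the Nevanlinna class: `sup_{0<r<1} ∫_0^{2π} log⁺|f(re^{iθ})| dθ < ∞`. -/
def InNevanlinna (f : ℂ → ℂ) : Prop :=
  ∃ C : ℝ, ∀ r ∈ Set.Ioo (0:ℝ) 1,
    (∫⁻ θ in Set.Ioc (0:ℝ) (2*Real.pi),
      ENNReal.ofReal (Real.log ‖f (circleMap 0 r θ)‖)) ≤ ENNReal.ofReal C

/-- Membership in the Hardy space `H^p`: `sup_{0<r<1} ∫_0^{2π} |f(re^{iθ})|^p dθ < ∞`. -/
def InHardy (p : ℝ) (f : ℂ → ℂ) : Prop :=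
  ∃ C : ℝ, ∀ r ∈ Set.Ioo (0:ℝ) 1,
    (∫⁻ θ in Set.Ioc (0:ℝ) (2*Real.pi),
      ENNReal.ofReal (‖f (circleMap 0 r θ)‖ ^ p)) ≤ ENNReal.ofReal C

/-- The dyadic arc of generation `n`, index `k`:
`{e^{iθ} : 2πk/2^n ≤ θ < 2π(k+1)/2^n}`. -/
def dyadicArc (n k : ℕ) : Set ℂ :=
  circleMap 0 1 '' Set.Ico (2*Real.pi*k/2^n) (2*Real.pi*(k+1)/2^n)

/-- The Stolz angle of opening `π/2` with vertex `ζ ∈ ∂𝔻`. -/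
def stolz (ζ : ℂ) : Set ℂ :=
  {z : ℂ | ‖z‖ < 1 ∧ ‖z - ζ‖ < Real.sqrt 2 * (1 - ‖z‖)}

/-- The Privalov star of a set `E ⊆ ∂𝔻`: the union of the Stolz angles of opening `π/2`
emanating from points of `E`. -/
def privalovStar (E : Set ℂ) : Set ℂ := ⋃ ζ ∈ E, stolz ζ

/-- The closed arc of the unit circle centered at `x ∈ ∂𝔻` of arclength `2ε`. -/
def arcAround (x : ℂ) (ε : ℝ) : Set ℂ :=
  (fun θ : ℝ => x * Complex.exp (θ * Complex.I)) '' Set.Icc (-ε) ε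

/-- A (half-open) arc of the unit circle. -/
def IsCircleArc (I : Set ℂ) : Prop :=
  ∃ a b : ℝ, a ≤ b ∧ I = circleMap 0 1 '' Set.Ioc a b

/-- `m` is the midpoint of the arc `J` of the unit circle: `m ∈ ∂𝔻` and `J` is contained in
the closed arc centered at `m` of the same arclength as `J`. -/
def IsArcCenter (J : Set ℂ) (m : ℂ) : Prop :=
  m ∈ unitCircle ∧ J ⊆ arcAround m (arcLen J / 2)

/-- The Stolz angle of opening `θ` with vertex `ζ ∈ ∂𝔻`. -/
def stolzAngle (θ : ℝ) (ζ : ℂ) : Set ℂ :=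
  {z : ℂ | ‖z‖ < 1 ∧ ‖z - ζ‖ < (1 - ‖z‖) / Real.cos (θ/2)}

/-- The Privalov star of aperture `θ` of a closed set `F ⊆ ∂𝔻`. -/
def privalovStarA (F : Set ℂ) (θ : ℝ) : Set ℂ := ⋃ ζ ∈ F, stolzAngle θ ζ

/-- `∫_{K_{F,θ} ∩ ∂𝔻_ρ} P_μ(w) |dw|`: the integral of the Poisson extension of `μ` over the
part of the circle of radius `ρ` lying inside the Privalov star `K_{F,θ}`, with respect to
arclength on that circle. -/
def starIntegral (μ : Measure ℂ) (F : Set ℂ) (θ ρ : ℝ) : ℝ≥0∞ :=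
  ∫⁻ t in Set.Ico (0:ℝ) (2*Real.pi),
    Set.indicator (privalovStarA F θ)
      (fun w => ENNReal.ofReal (poisson μ w)) (circleMap 0 ρ t) * ENNReal.ofReal ρ

end

/-!
Cover `E` at generation `n` by the `N n` dyadic arcs it meets. Since `μ_j` gives each such arc of
generation `n = j + 1 + j₀` mass at most `C (2π/2ⁿ)^α`, we get `μ(E) ≤ C ∑_{n > j₀} N n (2π/2ⁿ)^α`,
a tail of a series that converges when `E` is an `α`-Beurling–Carleson set; letting `j₀ → ∞`
gives `μ(E) = 0`.

For the convergence, lift `E` to the closed `2π`-periodic null set `A ⊆ ℝ`. The `N n` dyadic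
intervals meeting `A` lie in the `2π/2ⁿ`-neighbourhood of `A`, and a gap `(a, b)` of `A` meets
this neighbourhood in measure at most `2 min(b - a, 2π/2ⁿ)`. Hence
`N n (2π/2ⁿ)^α ≤ 2 ∑_{(a,b)} (2π/2ⁿ)^(α-1) min(b - a, 2π/2ⁿ)`, and summing the geometric series
over `n` bounds `∑ₙ N n (2π/2ⁿ)^α` by a multiple of `∑_J |J|^α`, since the gaps meeting `[0, 2π)`
map at most two-to-one onto the complementary arcs `J` of `E`, with `|J| = b - a`.
-/

open Real

lemma circleMap_one_eq_circleMap_one_iff {x y : ℝ} :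
    circleMap 0 1 x = circleMap 0 1 y ↔ ∃ m : ℤ, x = y + m * (2 * π) := by
  refine ⟨fun h => ?_, fun ⟨m, hm⟩ => hm ▸ ((periodic_circleMap 0 1).int_mul m) y⟩
  obtain ⟨m, hm⟩ := (circleMap_eq_circleMap_iff 0 one_ne_zero).1 h
  refine ⟨m, Complex.ofReal_injective ?_⟩
  apply mul_right_cancel₀ Complex.I_ne_zero
  push_cast
  linear_combination hm

-- Both sides are push-forwards of Haar measure on `AddCircle (2 * π)`.
lemma arcMeasure_eq_map_restrict_Ioc (t : ℝ) :
    arcMeasure = (volume.restrict (Ioc t (t + 2 * π))).map (circleMap 0 1) := by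
  have : Fact (0 < 2 * π) := ⟨two_pi_pos⟩
  have hfac : circleMap 0 1 = (fun y : AddCircle (2 * π) => (y.toCircle : ℂ)) ∘ (↑) := by
    ext1 x
    simp [AddCircle.toCircle_apply_mk, circleMap, two_pi_pos.ne']
  have hg : Measurable fun y : AddCircle (2 * π) => (y.toCircle : ℂ) :=
    (continuous_subtype_val.comp AddCircle.continuous_toCircle).measurable
  have key : ∀ s : ℝ, (volume.restrict (Ioc s (s + 2 * π))).map (circleMap 0 1)
      = (volume : Measure (AddCircle (2 * π))).map fun y => (y.toCircle : ℂ) := by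
    intro s
    rw [hfac, ← Measure.map_map hg measurable_quotient_mk'',
      (AddCircle.measurePreserving_mk (2 * π) s).map_eq]
  rw [arcMeasure, Measure.restrict_congr_set Ico_ae_eq_Ioc, key t]
  simpa using key 0

instance : IsFiniteMeasure arcMeasure := by
  rw [arcMeasure]; infer_instance

lemma ofReal_sub_le_arcMeasure_image_Ioo {a b : ℝ} (hb : b ≤ a + 2 * π) :
    ENNReal.ofReal (b - a) ≤ arcMeasure (circleMap 0 1 '' Ioo a b) := by
  rw [arcMeasure_eq_map_restrict_Ioc a, ← Real.volume_Ioo,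
    ← Measure.restrict_eq_self _ (Ioo_subset_Ioc_self.trans (Ioc_subset_Ioc_right hb))]
  exact Measure.le_map_apply_image (continuous_circleMap 0 1).aemeasurable _

lemma sub_le_arcLen_image_Ioo {a b : ℝ} (hb : b ≤ a + 2 * π) :
    b - a ≤ arcLen (circleMap 0 1 '' Ioo a b) :=
  (ENNReal.ofReal_le_iff_le_toReal (measure_ne_top _ _)).1
    (ofReal_sub_le_arcMeasure_image_Ioo hb)

lemma exists_isOpen_inter_unitCircle_eq_image_Ioo (a b : ℝ) :
    ∃ V : Set ℂ, IsOpen V ∧ unitCircle ∩ V = circleMap 0 1 '' Ioo a b := by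
  refine ⟨Complex.exp '' (Complex.im ⁻¹' Ioo a b),
    Complex.isOpenMap_exp _ (isOpen_Ioo.preimage Complex.continuous_im), ?_⟩
  ext w
  simp only [unitCircle, mem_inter_iff, mem_sphere_iff_norm, sub_zero, mem_image, mem_preimage]
  constructor
  · rintro ⟨hw, z, hz, rfl⟩
    have hre : z.re = 0 := by simpa [Complex.norm_exp] using hw
    have hz' : z = z.im * Complex.I := by apply Complex.ext <;> simp [hre]
    refine ⟨z.im, hz, ?_⟩
    conv_rhs => rw [hz']
    simp [circleMap]
  · rintro ⟨θ, hθ, rfl⟩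
    exact ⟨by simp, θ * Complex.I, by simpa using hθ, by simp [circleMap]⟩

section Gaps

variable {α : Type*} [LinearOrder α]

-- The bounded components `(a, b)` of `Aᶜ`, recorded by their endpoints.
def gaps (A : Set α) : Set (α × α) :=
  {g | g.1 < g.2 ∧ g.1 ∈ A ∧ g.2 ∈ A ∧ Disjoint (Ioo g.1 g.2) A}

lemma eq_of_mem_gaps {A : Set α} {g g' : α × α} (hg : g ∈ gaps A) (hg' : g' ∈ gaps A)
    {x : α} (hx : x ∈ Ioo g.1 g.2) (hx' : x ∈ Ioo g'.1 g'.2) : g = g' := by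
  have left_le {g g' : α × α} (hg : g ∈ gaps A) (hg' : g' ∈ gaps A)
      (hx : x ∈ Ioo g.1 g.2) (hx' : x ∈ Ioo g'.1 g'.2) : g'.1 ≤ g.1 :=
    not_lt.1 fun h => disjoint_left.1 hg.2.2.2 ⟨h, hx'.1.trans hx.2⟩ hg'.2.1
  have right_le {g g' : α × α} (hg : g ∈ gaps A) (hg' : g' ∈ gaps A)
      (hx : x ∈ Ioo g.1 g.2) (hx' : x ∈ Ioo g'.1 g'.2) : g.2 ≤ g'.2 :=
    not_lt.1 fun h => disjoint_left.1 hg.2.2.2 ⟨hx.1.trans hx'.2, h⟩ hg'.2.2.1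
  exact Prod.ext (le_antisymm (left_le hg' hg hx' hx) (left_le hg hg' hx hx'))
    (le_antisymm (right_le hg hg' hx hx') (right_le hg' hg hx' hx))

lemma pairwiseDisjoint_gaps (A : Set α) :
    (gaps A).PairwiseDisjoint fun g => Ioo g.1 g.2 := fun _ hg _ hg' hne =>
  disjoint_left.2 fun _ hx hx' => hne (eq_of_mem_gaps hg hg' hx hx')

lemma countable_gaps [TopologicalSpace α] [OrderTopology α] [DenselyOrdered α]
    [TopologicalSpace.SeparableSpace α] (A : Set α) : (gaps A).Countable :=
  (pairwiseDisjoint_gaps A).countable_of_isOpen (fun _ _ => isOpen_Ioo)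
    fun _ hg => nonempty_Ioo.2 hg.1

end Gaps

lemma exists_mem_gaps_of_notMem {α : Type*} [ConditionallyCompleteLinearOrder α]
    [TopologicalSpace α] [OrderTopology α] {A : Set α} (hA : IsClosed A) {x : α} (hx : x ∉ A)
    (hbelow : (A ∩ Iic x).Nonempty) (habove : (A ∩ Ici x).Nonempty) :
    ∃ g ∈ gaps A, x ∈ Ioo g.1 g.2 := by
  have hbdd : BddAbove (A ∩ Iic x) := ⟨x, fun _ hy => hy.2⟩
  have hbdd' : BddBelow (A ∩ Ici x) := ⟨x, fun _ hy => hy.2⟩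
  obtain ⟨haA, hax⟩ := (hA.inter isClosed_Iic).csSup_mem hbelow hbdd
  obtain ⟨hbA, hxb⟩ := (hA.inter isClosed_Ici).csInf_mem habove hbdd'
  have hax' : sSup (A ∩ Iic x) < x := lt_of_le_of_ne hax fun h => hx (h ▸ haA)
  have hxb' : x < sInf (A ∩ Ici x) := lt_of_le_of_ne hxb fun h => hx (h ▸ hbA)
  refine ⟨(sSup (A ∩ Iic x), sInf (A ∩ Ici x)), ⟨hax'.trans hxb', haA, hbA, ?_⟩, hax', hxb'⟩
  refine disjoint_left.2 fun y hy hyA => ?_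
  rcases le_total y x with hyx | hxy
  · exact (le_csSup hbdd ⟨hyA, hyx⟩).not_gt hy.1
  · exact (csInf_le hbdd' ⟨hyA, hxy⟩).not_gt hy.2

lemma volume_Ioo_inter_thickening_le {A : Set ℝ} {a b : ℝ} (hab : Disjoint (Ioo a b) A)
    (δ : ℝ) : volume (Ioo a b ∩ Metric.thickening δ A) ≤ 2 * ENNReal.ofReal (min (b - a) δ) := by
  have volume_le (c : ℝ) : volume (Ioo a b ∩ Ioo c (c + δ)) ≤ ENNReal.ofReal (min (b - a) δ) := by
    calc volume (Ioo a b ∩ Ioo c (c + δ))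
        ≤ min (volume (Ioo a b)) (volume (Ioo c (c + δ))) :=
          le_min (measure_mono inter_subset_left) (measure_mono inter_subset_right)
      _ = ENNReal.ofReal (min (b - a) δ) := by
          rw [Real.volume_Ioo, Real.volume_Ioo, add_sub_cancel_left, ENNReal.ofReal_min]
  have hsub : Ioo a b ∩ Metric.thickening δ A ⊆
      (Ioo a b ∩ Ioo a (a + δ)) ∪ (Ioo a b ∩ Ioo (b - δ) (b - δ + δ)) := by
    rintro x ⟨hx, hxA⟩
    obtain ⟨θ, hθA, hθx⟩ := Metric.mem_thickening_iff.1 hxA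
    rw [Real.dist_eq, abs_lt] at hθx
    rcases le_or_gt θ a with hθa | haθ
    · exact Or.inl ⟨hx, hx.1, by linarith⟩
    · have hbθ : b ≤ θ := not_lt.1 fun h => disjoint_left.1 hab ⟨haθ, h⟩ hθA
      exact Or.inr ⟨hx, by linarith, by linarith [hx.2]⟩
  calc volume (Ioo a b ∩ Metric.thickening δ A)
      ≤ volume (Ioo a b ∩ Ioo a (a + δ)) + volume (Ioo a b ∩ Ioo (b - δ) (b - δ + δ)) :=
        (measure_mono hsub).trans (measure_union_le _ _)
    _ ≤ 2 * ENNReal.ofReal (min (b - a) δ) := by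
        rw [two_mul]; exact add_le_add (volume_le a) (volume_le _)

section CircleGaps

variable {E : Set ℂ}

lemma add_int_mul_mem_preimage_circleMap {x : ℝ} (m : ℤ) :
    x + m * (2 * π) ∈ circleMap 0 1 ⁻¹' E ↔ x ∈ circleMap 0 1 ⁻¹' E := by
  simp only [mem_preimage, (periodic_circleMap 0 1).int_mul m x]

lemma add_int_mul_mem_gaps {g : ℝ × ℝ} (hg : g ∈ gaps (circleMap 0 1 ⁻¹' E)) (m : ℤ) :
    (g.1 + m * (2 * π), g.2 + m * (2 * π)) ∈ gaps (circleMap 0 1 ⁻¹' E) := by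
  refine ⟨by simpa using hg.1, (add_int_mul_mem_preimage_circleMap m).2 hg.2.1,
    (add_int_mul_mem_preimage_circleMap m).2 hg.2.2.1, disjoint_left.2 fun x hx hxE => ?_⟩
  refine disjoint_left.1 hg.2.2.2
    (show x - m * (2 * π) ∈ Ioo g.1 g.2 from ⟨by linarith [hx.1], by linarith [hx.2]⟩) ?_
  rwa [← add_int_mul_mem_preimage_circleMap m, sub_add_cancel]

lemma le_add_two_pi_of_mem_gaps {g : ℝ × ℝ} (hg : g ∈ gaps (circleMap 0 1 ⁻¹' E)) :
    g.2 ≤ g.1 + 2 * π :=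
  not_lt.1 fun h => disjoint_left.1 hg.2.2.2 ⟨by linarith [two_pi_pos], h⟩
    (by simpa using (add_int_mul_mem_preimage_circleMap (E := E) 1).2 hg.2.1)

lemma exists_mem_gaps_preimage_circleMap (hE : IsClosed E) {θ x : ℝ}
    (hθ : θ ∈ circleMap 0 1 ⁻¹' E) (hx : x ∉ circleMap 0 1 ⁻¹' E) :
    ∃ g ∈ gaps (circleMap 0 1 ⁻¹' E), x ∈ Ioo g.1 g.2 := by
  set m := ⌊(x - θ) / (2 * π)⌋
  have hm := Int.floor_le ((x - θ) / (2 * π))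
  have hm' := Int.lt_floor_add_one ((x - θ) / (2 * π))
  rw [le_div_iff₀ two_pi_pos] at hm
  rw [div_lt_iff₀ two_pi_pos] at hm'
  refine exists_mem_gaps_of_notMem (hE.preimage (continuous_circleMap 0 1)) hx
    ⟨θ + m * (2 * π), (add_int_mul_mem_preimage_circleMap m).2 hθ, by simp only [mem_Iic]; linarith⟩
    ⟨θ + (m + 1 : ℤ) * (2 * π), (add_int_mul_mem_preimage_circleMap _).2 hθ, ?_⟩
  push_cast
  simp only [mem_Ici]
  linarith

lemma connectedComponentIn_subset_image_Ioo {g : ℝ × ℝ} (hg : g ∈ gaps (circleMap 0 1 ⁻¹' E))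
    {x : ℝ} (hx : x ∈ Ioo g.1 g.2) :
    connectedComponentIn (unitCircle \ E) (circleMap 0 1 x) ⊆ circleMap 0 1 '' Ioo g.1 g.2 := by
  -- the arc is clopen in `unitCircle \ E`: open by `hVU`, closed as its endpoints lie in `E`
  obtain ⟨V, hV, hVU⟩ := exists_isOpen_inter_unitCircle_eq_image_Ioo g.1 g.2
  set U := circleMap 0 1 '' Ioo g.1 g.2
  set J := connectedComponentIn (unitCircle \ E) (circleMap 0 1 x)
  have hclosure : closure U ⊆ U ∪ E := by
    refine (closure_minimal (image_mono Ioo_subset_Icc_self)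
      (isCompact_Icc.image (continuous_circleMap 0 1)).isClosed).trans ?_
    rintro _ ⟨t, ht, rfl⟩
    rcases eq_endpoints_or_mem_Ioo_of_mem_Icc ht with rfl | rfl | ht'
    · exact Or.inr hg.2.1
    · exact Or.inr hg.2.2.1
    · exact Or.inl (mem_image_of_mem _ ht')
  have hJ : J ⊆ unitCircle \ E := connectedComponentIn_subset _ _
  have hcover : J ⊆ V ∪ (closure U)ᶜ := by
    intro z hz
    by_cases hzU : z ∈ closure U
    · rcases hclosure hzU with h | h
      · exact Or.inl (hVU.symm ▸ h).2
      · exact absurd h (hJ hz).2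
    · exact Or.inr hzU
  have hsep : J ∩ (V ∩ (closure U)ᶜ) = ∅ :=
    eq_empty_of_forall_notMem fun z ⟨hz, hzV, hzU⟩ =>
      hzU (subset_closure (hVU ▸ ⟨(hJ hz).1, hzV⟩))
  rcases isPreconnected_iff_subset_of_disjoint.1 isPreconnected_connectedComponentIn V _ hV
    isClosed_closure.isOpen_compl hcover hsep with h | h
  · exact fun z hz => hVU ▸ ⟨(hJ hz).1, h hz⟩
  · have hxU : circleMap 0 1 x ∈ U := mem_image_of_mem _ hx
    exact absurd (subset_closure hxU)
      (h (mem_connectedComponentIn ⟨circleMap_mem_sphere 0 zero_le_one x,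
        disjoint_left.1 hg.2.2.2 hx⟩))

lemma image_Ioo_mem_complArcs {g : ℝ × ℝ} (hg : g ∈ gaps (circleMap 0 1 ⁻¹' E)) :
    circleMap 0 1 '' Ioo g.1 g.2 ∈ complArcs E := by
  obtain ⟨x, hx⟩ := nonempty_Ioo.2 hg.1
  have hUsub : circleMap 0 1 '' Ioo g.1 g.2 ⊆ unitCircle \ E := by
    rintro _ ⟨t, ht, rfl⟩
    exact ⟨circleMap_mem_sphere 0 zero_le_one t, disjoint_left.1 hg.2.2.2 ht⟩
  refine ⟨circleMap 0 1 x, hUsub (mem_image_of_mem _ hx), subset_antisymm ?_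
    (connectedComponentIn_subset_image_Ioo hg hx)⟩
  exact (isPreconnected_Ioo.image _ (continuous_circleMap 0 1).continuousOn)
    |>.subset_connectedComponentIn (mem_image_of_mem _ hx) hUsub

lemma injOn_image_Ioo_gaps (t : ℝ) :
    InjOn (fun g : ℝ × ℝ => circleMap 0 1 '' Ioo g.1 g.2)
      (gaps (circleMap 0 1 ⁻¹' E) ∩ {g | g.1 ∈ Ico t (t + 2 * π)}) := by
  rintro g ⟨hg, hgt⟩ g' ⟨hg', hg't⟩ h
  replace h : circleMap 0 1 '' Ioo g.1 g.2 = circleMap 0 1 '' Ioo g'.1 g'.2 := h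
  obtain ⟨x, hx⟩ := nonempty_Ioo.2 hg.1
  obtain ⟨x', hx', hxx'⟩ : circleMap 0 1 x ∈ circleMap 0 1 '' Ioo g'.1 g'.2 :=
    h ▸ mem_image_of_mem _ hx
  obtain ⟨m, hm⟩ := circleMap_one_eq_circleMap_one_iff.1 hxx'
  have hshift := eq_of_mem_gaps hg (add_int_mul_mem_gaps hg' (-m)) hx
    ⟨by push_cast; linarith [hx'.1], by push_cast; linarith [hx'.2]⟩
  have h1 : g.1 = g'.1 + (-m : ℤ) * (2 * π) := congrArg Prod.fst hshift
  push_cast at h1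
  have hm1 : (m : ℝ) * (2 * π) < 1 * (2 * π) := by linarith [hgt.1, hgt.2, hg't.1, hg't.2]
  have hm2 : (-1 : ℝ) * (2 * π) < m * (2 * π) := by linarith [hgt.1, hgt.2, hg't.1, hg't.2]
  have hm0 : m = 0 := by
    have hm_lt : m < 1 := by exact_mod_cast lt_of_mul_lt_mul_right hm1 two_pi_pos.le
    have hm_gt : -1 < m := by exact_mod_cast lt_of_mul_lt_mul_right hm2 two_pi_pos.le
    omega
  simpa [hm0] using hshift

lemma tsum_gaps_rpow_le_tsum_complArcs {α : ℝ} (hα : 0 ≤ α) (t : ℝ) :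
    ∑' g : ↥(gaps (circleMap 0 1 ⁻¹' E) ∩ {g | g.1 ∈ Ico t (t + 2 * π)}),
        ENNReal.ofReal ((g.1.2 - g.1.1) ^ α)
      ≤ ∑' J : complArcs E, ENNReal.ofReal (arcLen J ^ α) := by
  let φ : ↥(gaps (circleMap 0 1 ⁻¹' E) ∩ {g | g.1 ∈ Ico t (t + 2 * π)}) → complArcs E :=
    fun g => ⟨_, image_Ioo_mem_complArcs g.2.1⟩
  have hφ : Function.Injective φ := fun g g' h =>
    Subtype.ext (injOn_image_Ioo_gaps t g.2 g'.2 (congrArg Subtype.val h))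
  calc _ ≤ ∑' g, ENNReal.ofReal (arcLen (φ g) ^ α) :=
        ENNReal.tsum_le_tsum fun g => ENNReal.ofReal_le_ofReal <|
          Real.rpow_le_rpow (sub_nonneg.2 g.2.1.1.le)
            (sub_le_arcLen_image_Ioo (le_add_two_pi_of_mem_gaps g.2.1)) hα
    _ ≤ _ := ENNReal.tsum_comp_le_tsum_of_injective hφ (fun J => ENNReal.ofReal (arcLen J ^ α))

lemma volume_preimage_circleMap_inter_Ico_eq_zero (hE : MeasurableSet E)
    (hE0 : arcMeasure E = 0) : volume (circleMap 0 1 ⁻¹' E ∩ Ico 0 (2 * π)) = 0 := by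
  have hf := (continuous_circleMap 0 1).measurable
  rwa [arcMeasure, Measure.map_apply hf hE, Measure.restrict_apply (hf hE)] at hE0

def circleGaps (E : Set ℂ) : Set (ℝ × ℝ) :=
  {g ∈ gaps (circleMap 0 1 ⁻¹' E) | (Ioo g.1 g.2 ∩ Ico 0 (2 * π)).Nonempty}

lemma volume_thickening_inter_Ico_le (hE : IsClosed E) (hE0 : arcMeasure E = 0) (δ : ℝ) :
    volume (Metric.thickening δ (circleMap 0 1 ⁻¹' E) ∩ Ico 0 (2 * π))
      ≤ ∑' g : circleGaps E, 2 * ENNReal.ofReal (min (g.1.2 - g.1.1) δ) := by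
  have : Countable (circleGaps E) := ((countable_gaps _).mono (sep_subset _ _)).to_subtype
  have hcover : Metric.thickening δ (circleMap 0 1 ⁻¹' E) ∩ Ico 0 (2 * π) ⊆
      (circleMap 0 1 ⁻¹' E ∩ Ico 0 (2 * π)) ∪
        ⋃ g : circleGaps E, Ioo g.1.1 g.1.2 ∩ Metric.thickening δ (circleMap 0 1 ⁻¹' E) := by
    rintro x ⟨hxδ, hx⟩
    by_cases hxE : x ∈ circleMap 0 1 ⁻¹' E
    · exact Or.inl ⟨hxE, hx⟩
    obtain ⟨θ, hθ, -⟩ := Metric.mem_thickening_iff.1 hxδ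
    obtain ⟨g, hg, hxg⟩ := exists_mem_gaps_preimage_circleMap hE hθ hxE
    exact Or.inr (mem_iUnion.2 ⟨⟨g, hg, x, hxg, hx⟩, hxg, hxδ⟩)
  calc _ ≤ volume (circleMap 0 1 ⁻¹' E ∩ Ico 0 (2 * π)) + volume
        (⋃ g : circleGaps E, Ioo g.1.1 g.1.2 ∩ Metric.thickening δ (circleMap 0 1 ⁻¹' E)) :=
        (measure_mono hcover).trans (measure_union_le _ _)
    _ ≤ 0 + ∑' g : circleGaps E,
          volume (Ioo g.1.1 g.1.2 ∩ Metric.thickening δ (circleMap 0 1 ⁻¹' E)) := by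
        rw [volume_preimage_circleMap_inter_Ico_eq_zero hE.measurableSet hE0]
        gcongr
        exact measure_iUnion_le _
    _ ≤ _ := by
        rw [zero_add]
        exact ENNReal.tsum_le_tsum fun g => volume_Ioo_inter_thickening_le g.2.1.2.2.2 δ

lemma tsum_circleGaps_rpow_le {α : ℝ} (hα : 0 ≤ α) :
    ∑' g : circleGaps E, ENNReal.ofReal ((g.1.2 - g.1.1) ^ α)
      ≤ 2 * ∑' J : complArcs E, ENNReal.ofReal (arcLen J ^ α) := by
  -- a gap meeting `[0, 2π)` starts in `[0, 2π)` or in `[-2π, 0)`; on each window the gaps map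
  -- injectively to the complementary arcs
  have hsub : circleGaps E ⊆ (gaps (circleMap 0 1 ⁻¹' E) ∩ {g | g.1 ∈ Ico 0 (0 + 2 * π)}) ∪
      (gaps (circleMap 0 1 ⁻¹' E) ∩ {g | g.1 ∈ Ico (-(2 * π)) (-(2 * π) + 2 * π)}) := by
    rintro g ⟨hg, x, hxg, hx⟩
    have hlen := le_add_two_pi_of_mem_gaps hg
    rcases le_or_gt 0 g.1 with h | h
    · exact Or.inl ⟨hg, h, by linarith [hxg.1, hx.2]⟩
    · exact Or.inr ⟨hg, by linarith [hxg.2, hx.1], by linarith⟩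
  calc _ ≤ _ := ENNReal.tsum_mono_subtype (fun g : ℝ × ℝ => ENNReal.ofReal ((g.2 - g.1) ^ α)) hsub
    _ ≤ _ := ENNReal.tsum_union_le (fun g : ℝ × ℝ => ENNReal.ofReal ((g.2 - g.1) ^ α)) _ _
    _ ≤ _ := add_le_add (tsum_gaps_rpow_le_tsum_complArcs hα _)
        (tsum_gaps_rpow_le_tsum_complArcs hα _)
    _ = _ := (two_mul _).symm

end CircleGaps

section Dyadic

open scoped Classical

variable {E : Set ℂ}

lemma mem_Ico_dyadic_iff_floor_eq {n k : ℕ} {x : ℝ} (hx : 0 ≤ x) :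
    x ∈ Ico (2 * π * k / 2 ^ n) (2 * π * (k + 1) / 2 ^ n) ↔ ⌊x / (2 * π / 2 ^ n)⌋₊ = k := by
  have hℓ : 0 < 2 * π / 2 ^ n := by positivity
  have hk : 2 * π * k / 2 ^ n = k * (2 * π / 2 ^ n) := by ring
  have hk' : 2 * π * (k + 1) / 2 ^ n = (k + 1) * (2 * π / 2 ^ n) := by ring
  rw [Nat.floor_eq_iff (div_nonneg hx hℓ.le), le_div_iff₀ hℓ, div_lt_iff₀ hℓ, mem_Ico, hk, hk']

lemma pairwiseDisjoint_Ico_dyadic (n : ℕ) (s : Set ℕ) :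
    s.PairwiseDisjoint fun k : ℕ => Ico (2 * π * k / 2 ^ n) (2 * π * (k + 1) / 2 ^ n) :=
  fun k _ k' _ hne => disjoint_left.2 fun x hx hx' => by
    have hx0 : 0 ≤ x := le_trans (by positivity) hx.1
    exact hne (((mem_Ico_dyadic_iff_floor_eq hx0).1 hx).symm.trans
      ((mem_Ico_dyadic_iff_floor_eq hx0).1 hx'))

noncomputable def dyadicArcsMeeting (E : Set ℂ) (n : ℕ) : Finset ℕ :=
  {k ∈ Finset.range (2 ^ n) | (dyadicArc n k ∩ E).Nonempty}

lemma card_dyadicArcsMeeting_mul_le (n : ℕ) :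
    ((dyadicArcsMeeting E n).card : ℝ≥0∞) * ENNReal.ofReal (2 * π / 2 ^ n)
      ≤ volume (Metric.thickening (2 * π / 2 ^ n) (circleMap 0 1 ⁻¹' E) ∩ Ico 0 (2 * π)) := by
  have hvol (k : ℕ) : volume (Ico (2 * π * k / 2 ^ n) (2 * π * (k + 1) / 2 ^ n))
      = ENNReal.ofReal (2 * π / 2 ^ n) := by
    rw [Real.volume_Ico]; congr 1; ring
  rw [← nsmul_eq_mul, ← Finset.sum_const, ← Finset.sum_congr rfl fun k _ => hvol k,
    ← measure_biUnion_finset (pairwiseDisjoint_Ico_dyadic n _) fun _ _ => measurableSet_Ico]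
  refine measure_mono (iUnion₂_subset fun k hk => ?_)
  obtain ⟨hk, hkE⟩ := Finset.mem_filter.1 hk
  obtain ⟨θ, hθ, hθE⟩ := image_inter_nonempty_iff.1 hkE
  have hk2 : ((k : ℝ) + 1) ≤ 2 ^ n := by exact_mod_cast Finset.mem_range.1 hk
  intro x hx
  refine ⟨Metric.mem_thickening_iff.2 ⟨θ, hθE, ?_⟩, le_trans (by positivity) hx.1,
    hx.2.trans_le ?_⟩
  · have hlen : 2 * π * (k + 1) / 2 ^ n = 2 * π * k / 2 ^ n + 2 * π / 2 ^ n := by ring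
    rw [Real.dist_eq, abs_lt]
    constructor <;> linarith [hx.1, hx.2, hθ.1, hθ.2]
  · rw [div_le_iff₀ (by positivity)]
    nlinarith [pi_pos]

lemma subset_biUnion_dyadicArcsMeeting (hE : E ⊆ unitCircle) (n : ℕ) :
    E ⊆ ⋃ k ∈ dyadicArcsMeeting E n, dyadicArc n k := by
  intro z hz
  obtain ⟨θ₀, rfl⟩ : z ∈ range (circleMap 0 1) := by
    simpa [range_circleMap, unitCircle] using hE hz
  obtain ⟨θ, hθ, hθeq⟩ := (periodic_circleMap 0 1).exists_mem_Ico₀ two_pi_pos θ₀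
  have hℓ : 0 < 2 * π / 2 ^ n := by positivity
  have hmem := (mem_Ico_dyadic_iff_floor_eq hθ.1).2 (rfl : ⌊θ / (2 * π / 2 ^ n)⌋₊ = _)
  have hlt : ⌊θ / (2 * π / 2 ^ n)⌋₊ < 2 ^ n := by
    rw [Nat.floor_lt (div_nonneg hθ.1 hℓ.le), div_lt_iff₀ hℓ]
    push_cast
    field_simp
    exact hθ.2
  exact mem_biUnion (Finset.mem_filter.2 ⟨Finset.mem_range.2 hlt, _, ⟨θ, hmem, hθeq.symm⟩, hz⟩)
    ⟨θ, hmem, hθeq.symm⟩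

lemma measure_le_card_dyadicArcsMeeting_mul {ν : Measure ℂ} (hE : E ⊆ unitCircle) {n : ℕ}
    {c : ℝ≥0∞} (hν : ∀ k < 2 ^ n, ν (dyadicArc n k) ≤ c) :
    ν E ≤ (dyadicArcsMeeting E n).card * c :=
  calc ν E ≤ ν (⋃ k ∈ dyadicArcsMeeting E n, dyadicArc n k) :=
        measure_mono (subset_biUnion_dyadicArcsMeeting hE n)
    _ ≤ ∑ k ∈ dyadicArcsMeeting E n, ν (dyadicArc n k) := measure_biUnion_finset_le _ _
    _ ≤ ∑ _k ∈ dyadicArcsMeeting E n, c := Finset.sum_le_sum fun k hk =>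
        hν k (Finset.mem_range.1 (Finset.mem_filter.1 hk).1)
    _ = _ := by rw [Finset.sum_const, nsmul_eq_mul]

end Dyadic

lemma mul_two_pow_rpow {x : ℝ} (hx : 0 ≤ x) (s : ℝ) (m : ℕ) :
    (x * 2 ^ m) ^ s = x ^ s * (2 ^ s) ^ m := by
  rw [Real.mul_rpow hx (by positivity), ← Real.rpow_natCast (2 : ℝ) m, ← Real.rpow_mul zero_le_two,
    mul_comm (m : ℝ) s, Real.rpow_mul zero_le_two, Real.rpow_natCast]

lemma rpow_sub_one_mul_min_le_of_mul_two_pow_le {α ℓ L : ℝ} (hα : 0 ≤ α) (hℓ : 0 < ℓ) {m : ℕ}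
    (h : ℓ * 2 ^ m ≤ L) : ℓ ^ (α - 1) * min L ℓ ≤ L ^ α * ((2 ^ α)⁻¹) ^ m := by
  have hle : ℓ ≤ L := (le_mul_of_one_le_right hℓ.le (one_le_pow₀ one_le_two)).trans h
  have hpow : ℓ ^ α * (2 ^ α) ^ m ≤ L ^ α := by
    rw [← mul_two_pow_rpow hℓ.le]
    exact Real.rpow_le_rpow (by positivity) h hα
  rwa [min_eq_right hle, Real.rpow_sub_one hℓ.ne', div_mul_cancel₀ _ hℓ.ne', inv_pow,
    ← div_eq_mul_inv, le_div_iff₀ (by positivity)]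

lemma rpow_sub_one_mul_min_le_of_le_mul_two_pow {α ℓ L : ℝ} (hα : α ≤ 1) (hL : 0 < L) {m : ℕ}
    (h : L * 2 ^ m ≤ ℓ) : ℓ ^ (α - 1) * min L ℓ ≤ L ^ α * (2 ^ (α - 1)) ^ m := by
  have hle : L ≤ ℓ := (le_mul_of_one_le_right hL.le (one_le_pow₀ one_le_two)).trans h
  calc ℓ ^ (α - 1) * min L ℓ ≤ (L * 2 ^ m) ^ (α - 1) * L := by
        rw [min_eq_left hle]
        exact mul_le_mul_of_nonneg_right
          (Real.rpow_le_rpow_of_nonpos (by positivity) h (by linarith)) hL.le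
    _ = L ^ α * (2 ^ (α - 1)) ^ m := by
        rw [mul_two_pow_rpow hL.le, Real.rpow_sub_one hL.ne']
        field_simp

-- Scales `ℓ ≤ L` contribute a geometric series of ratio `2^(-α)`, those above `L` one of ratio
-- `2^(α-1)`, both starting at `≤ L^α`.
lemma exists_tsum_rpow_sub_one_mul_min_le {α : ℝ} (hα : α ∈ Ioo (0 : ℝ) 1) {r : ℝ}
    (hr : 0 < r) : ∃ K : ℝ≥0∞, K ≠ ⊤ ∧ ∀ L : ℝ, 0 < L →
      ∑' n : ℕ, ENNReal.ofReal ((r / 2 ^ n) ^ (α - 1) * min L (r / 2 ^ n))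
        ≤ K * ENNReal.ofReal (L ^ α) := by
  set q₁ := ENNReal.ofReal ((2 ^ α)⁻¹)
  set q₂ := ENNReal.ofReal (2 ^ (α - 1))
  have hq₁ : q₁ < 1 := ENNReal.ofReal_lt_one.2 (inv_lt_one_of_one_lt₀
    (Real.one_lt_rpow one_lt_two hα.1))
  have hq₂ : q₂ < 1 := ENNReal.ofReal_lt_one.2 (Real.rpow_lt_one_of_one_lt_of_neg one_lt_two
    (by linarith [hα.2]))
  refine ⟨(1 - q₂)⁻¹ + (1 - q₁)⁻¹, ENNReal.add_ne_top.2 ⟨ENNReal.inv_ne_top.2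
    (tsub_pos_of_lt hq₂).ne', ENNReal.inv_ne_top.2 (tsub_pos_of_lt hq₁).ne'⟩, fun L hL => ?_⟩
  set u : ℕ → ℝ := fun n => r / 2 ^ n
  have hu (n : ℕ) : 0 < u n := by positivity
  have hu_add (n m : ℕ) : u (m + n) * 2 ^ m = u n := by
    simp only [u, pow_add]
    field_simp
  have hex : ∃ n, u n ≤ L := by
    obtain ⟨n, hn⟩ := pow_unbounded_of_one_lt (r / L) one_lt_two
    refine ⟨n, div_le_of_le_mul₀ (by positivity) hL.le ?_⟩
    rw [div_lt_iff₀ hL] at hn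
    linarith
  set n₀ := Nat.find hex
  have tail (m : ℕ) : ENNReal.ofReal (u (m + n₀) ^ (α - 1) * min L (u (m + n₀)))
      ≤ ENNReal.ofReal (L ^ α) * q₁ ^ m := by
    rw [← ENNReal.ofReal_pow (by positivity), ← ENNReal.ofReal_mul (by positivity)]
    exact ENNReal.ofReal_le_ofReal (rpow_sub_one_mul_min_le_of_mul_two_pow_le hα.1.le (hu _)
      ((hu_add n₀ m).trans_le (Nat.find_spec hex)))
  have head (m : ℕ) (hm : m < n₀) :
      ENNReal.ofReal (u (n₀ - 1 - m) ^ (α - 1) * min L (u (n₀ - 1 - m)))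
        ≤ ENNReal.ofReal (L ^ α) * q₂ ^ m := by
    have hL' : L < u (n₀ - 1) := not_le.1 (Nat.find_min hex (by omega : n₀ - 1 < n₀))
    have hu' : L * 2 ^ m ≤ u (n₀ - 1 - m) := by
      rw [← hu_add, show m + (n₀ - 1 - m) = n₀ - 1 by omega]
      gcongr
    rw [← ENNReal.ofReal_pow (by positivity), ← ENNReal.ofReal_mul (by positivity)]
    exact ENNReal.ofReal_le_ofReal
      (rpow_sub_one_mul_min_le_of_le_mul_two_pow hα.2.le hL hu')
  show ∑' n, ENNReal.ofReal (u n ^ (α - 1) * min L (u n)) ≤ _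
  rw [← Summable.sum_add_tsum_nat_add' (k := n₀) ENNReal.summable, ← Finset.sum_range_reflect,
    add_mul]
  gcongr
  · calc _ ≤ ∑ m ∈ Finset.range n₀, ENNReal.ofReal (L ^ α) * q₂ ^ m :=
          Finset.sum_le_sum fun m hm => head m (Finset.mem_range.1 hm)
      _ ≤ ∑' m, ENNReal.ofReal (L ^ α) * q₂ ^ m := ENNReal.sum_le_tsum _
      _ = _ := by rw [ENNReal.tsum_mul_left, ENNReal.tsum_geometric, mul_comm]
  · calc _ ≤ ∑' m, ENNReal.ofReal (L ^ α) * q₁ ^ m := ENNReal.tsum_le_tsum tail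
      _ = _ := by rw [ENNReal.tsum_mul_left, ENNReal.tsum_geometric, mul_comm]

lemma card_dyadicArcsMeeting_mul_rpow_le {α : ℝ} {E : Set ℂ} (hE : IsClosed E)
    (hE0 : arcMeasure E = 0) (n : ℕ) :
    ((dyadicArcsMeeting E n).card : ℝ≥0∞) * ENNReal.ofReal ((2 * π / 2 ^ n) ^ α)
      ≤ ∑' g : circleGaps E, 2 * ENNReal.ofReal
          ((2 * π / 2 ^ n) ^ (α - 1) * min (g.1.2 - g.1.1) (2 * π / 2 ^ n)) := by
  have hℓ : 0 < 2 * π / 2 ^ n := by positivity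
  calc _ = ENNReal.ofReal ((2 * π / 2 ^ n) ^ (α - 1)) *
        (((dyadicArcsMeeting E n).card : ℝ≥0∞) * ENNReal.ofReal (2 * π / 2 ^ n)) := by
        rw [mul_left_comm, ← ENNReal.ofReal_mul (by positivity), Real.rpow_sub_one hℓ.ne',
          div_mul_cancel₀ _ hℓ.ne']
    _ ≤ ENNReal.ofReal ((2 * π / 2 ^ n) ^ (α - 1)) * ∑' g : circleGaps E,
        2 * ENNReal.ofReal (min (g.1.2 - g.1.1) (2 * π / 2 ^ n)) := by
        gcongr
        exact (card_dyadicArcsMeeting_mul_le n).trans (volume_thickening_inter_Ico_le hE hE0 _)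
    _ = _ := by
        rw [← ENNReal.tsum_mul_left]
        congr 1 with g
        rw [ENNReal.ofReal_mul (by positivity)]
        ring

lemma tsum_card_dyadicArcsMeeting_mul_rpow_ne_top {α : ℝ} (hα : α ∈ Ioo (0 : ℝ) 1) {E : Set ℂ}
    (hE : IsAlphaBeurlingCarleson α E) :
    ∑' n : ℕ, ((dyadicArcsMeeting E n).card : ℝ≥0∞) * ENNReal.ofReal ((2 * π / 2 ^ n) ^ α)
      ≠ ⊤ := by
  obtain ⟨hcl, -, hnull, hsum⟩ := hE
  obtain ⟨K, hK, hKL⟩ := exists_tsum_rpow_sub_one_mul_min_le hα two_pi_pos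
  have hS : ∑' J : complArcs E, ENNReal.ofReal (arcLen J ^ α) ≠ ⊤ := by
    rw [← ENNReal.ofReal_tsum_of_nonneg (f := fun J : complArcs E => arcLen J ^ α)
      (fun J => Real.rpow_nonneg ENNReal.toReal_nonneg α) hsum]
    exact ENNReal.ofReal_ne_top
  have hbound : ∑' n : ℕ, ((dyadicArcsMeeting E n).card : ℝ≥0∞) *
      ENNReal.ofReal ((2 * π / 2 ^ n) ^ α)
        ≤ 2 * K * (2 * ∑' J : complArcs E, ENNReal.ofReal (arcLen J ^ α)) :=
    calc _ ≤ ∑' (n : ℕ) (g : circleGaps E), 2 * ENNReal.ofReal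
          ((2 * π / 2 ^ n) ^ (α - 1) * min (g.1.2 - g.1.1) (2 * π / 2 ^ n)) :=
          ENNReal.tsum_le_tsum (card_dyadicArcsMeeting_mul_rpow_le hcl hnull)
      _ = ∑' g : circleGaps E, 2 * ∑' n : ℕ, ENNReal.ofReal
          ((2 * π / 2 ^ n) ^ (α - 1) * min (g.1.2 - g.1.1) (2 * π / 2 ^ n)) := by
          rw [ENNReal.tsum_comm]
          simp_rw [ENNReal.tsum_mul_left]
      _ ≤ ∑' g : circleGaps E, 2 * (K * ENNReal.ofReal ((g.1.2 - g.1.1) ^ α)) := by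
          gcongr with g
          exact hKL _ (sub_pos.2 g.2.1.1)
      _ = 2 * K * ∑' g : circleGaps E, ENNReal.ofReal ((g.1.2 - g.1.1) ^ α) := by
          rw [← ENNReal.tsum_mul_left]
          simp_rw [mul_assoc]
      _ ≤ _ := by
          gcongr
          exact tsum_circleGaps_rpow_le hα.1.le
  exact ne_top_of_le_ne_top (by finiteness) hbound

-- `mus j` plays the role of the paper's `μ_{j+1}`.
theorem stmt9_general (α : ℝ) (hα : α ∈ Set.Ioo (0:ℝ) 1)
    (mu : Measure ℂ)
    (C : ℝ)
    (hdec : ∀ j₀ : ℕ, ∃ mus : ℕ → Measure ℂ, mu = Measure.sum mus ∧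
      ∀ j : ℕ, ∀ k : Fin (2 ^ (j + 1 + j₀)),
        mus j (dyadicArc (j + 1 + j₀) (k : ℕ)) ≤
          ENNReal.ofReal (C * (2 * Real.pi / 2 ^ (j + 1 + j₀)) ^ α)) :
    ∀ E : Set ℂ, IsAlphaBeurlingCarleson α E → mu E = 0 := by
  intro E hE
  set f : ℕ → ℝ≥0∞ := fun n =>
    (dyadicArcsMeeting E n).card * ENNReal.ofReal ((2 * π / 2 ^ n) ^ α)
  have hbound (j₀ : ℕ) : mu E ≤ ENNReal.ofReal C * ∑' j, f (j + (1 + j₀)) := by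
    obtain ⟨mus, rfl, hmus⟩ := hdec j₀
    rw [Measure.sum_apply _ hE.1.measurableSet, ← ENNReal.tsum_mul_left]
    refine ENNReal.tsum_le_tsum fun j => ?_
    rw [← add_assoc, mul_left_comm, ← ENNReal.ofReal_mul' (by positivity)]
    exact measure_le_card_dyadicArcsMeeting_mul hE.2.1 fun k hk => hmus j ⟨k, hk⟩
  have hlim := ENNReal.Tendsto.const_mul
    (ENNReal.tendsto_sum_nat_add f (tsum_card_dyadicArcsMeeting_mul_rpow_ne_top hα hE))
    (Or.inr (ENNReal.ofReal_ne_top (r := C)))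
  rw [mul_zero] at hlim
  refine nonpos_iff_eq_zero.1 (ge_of_tendsto hlim (eventually_atTop.2 ⟨1, fun i hi => ?_⟩))
  obtain ⟨j₀, rfl⟩ := Nat.exists_eq_add_of_le hi
  exact hbound j₀

/-- converse to the Roberts decomposition, power gauge: if for some `C > 0` and
every offset `j₀` the measure `μ` decomposes as `μ = Σ_{j≥1} μ_j` with `μ_j(I) ≤ C·|I|^α` for
every dyadic arc `I` of generation `j + j₀`, then `μ` does not charge `α`-Beurling–Carleson
sets. (Here `mus j` plays the role of `μ_{j+1}`.) -/
theorem stmt9 (α : ℝ) (hα : α ∈ Set.Ioo (0:ℝ) 1)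
    (mu : Measure ℂ) [IsFiniteMeasure mu] (hcirc : mu unitCircleᶜ = 0)
    (C : ℝ) (hC : 0 < C)
    (hdec : ∀ j₀ : ℕ, ∃ mus : ℕ → Measure ℂ, mu = Measure.sum mus ∧
      ∀ j : ℕ, ∀ k : Fin (2 ^ (j + 1 + j₀)),
        mus j (dyadicArc (j + 1 + j₀) (k : ℕ)) ≤
          ENNReal.ofReal (C * (2 * Real.pi / 2 ^ (j + 1 + j₀)) ^ α)) :
    ∀ E : Set ℂ, IsAlphaBeurlingCarleson α E → mu E = 0 :=
  stmt9_general α hα mu C hdec
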